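/- The observer generates exactly the attacked observations of the specification language: L(Obs_A(G_K)) = AP(L(G_K)) for any replacement-removal attack A. -/
import Mathlib


open Classical

variable {S D R : Type*}

/-- `P : Σ* → Δ*` is an observation map. -/
def IsObsMap (P : List S → List D) : Prop :=
  P [] = [] ∧ (∀ w s : List S, P (w ++ s) = P w ++ P s) ∧ ∀ σ : S, (P [σ]).length ≤ 1

/-- `A` is the replacement-removal attack generated by `φ : Δ → 2^{Δ ∪ {ε}}`. -/
def IsRRAttack (φ : D → Set (List D)) (A : List D → Set (List D)) : Prop :=
  (∀ t : D, ∀ v ∈ φ t, v.length ≤ 1) ∧ (A [] = {[]}) ∧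
  ∀ (y : List D) (t : D),
    A (y ++ [t]) = {v | ∃ wy ∈ A y, ∃ wt ∈ φ t, v = wy ++ wt}

/-- Run of a deterministic partial automaton on a string. -/
def run {Q E : Type*} (δ : Q → E → Option Q) : Q → List E → Option Q
  | q, [] => some q
  | q, e :: l =>
    match δ q e with
    | none => none
    | some q' => run δ q' l

/-- Unobservable reach `UR_A(B)` of a set of states `B` under attack `A`. -/
def UR (P : List S → List D) (A : List D → Set (List D)) (η : R → S → Option R)
    (B : Set R) : Set R :=
  {z | ∃ r ∈ B, ∃ u : List S, [] ∈ A (P u) ∧ run η r u = some z}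

open Classical in
/-- Observer transition `η_{obs,A}`. -/
noncomputable def etaObs (P : List S → List D) (A : List D → Set (List D))
    (η : R → S → Option R) (B : Set R) (t : D) : Option (Set R) :=
  if ∃ r ∈ B, ∃ e : S, [t] ∈ A (P [e]) ∧ (η r e).isSome then
    some (UR P A η {z | ∃ r ∈ B, ∃ e : S, [t] ∈ A (P [e]) ∧ η r e = some z})
  else none

-- AUX

theorem run_append' {Q E : Type*} (δ : Q → E → Option Q) :
    ∀ (a b : List E) (q : Q),
      run δ q (a ++ b) = (run δ q a).bind (fun q' => run δ q' b)
  | [], b, q => rfl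
  | e :: a, b, q => by
    cases h : δ q e with
    | none => simp [run, h]
    | some q' => simp [run, h, run_append' δ a b q']

theorem run_single {Q E : Type*} (δ : Q → E → Option Q) (q : Q) (e : E) :
    run δ q [e] = δ q e := by
  cases h : δ q e <;> simp [run, h]

theorem len_le_one' {α : Type*} : ∀ {l : List α}, l.length ≤ 1 → l = [] ∨ ∃ a, l = [a]
  | [], _ => Or.inl rfl
  | [a], _ => Or.inr ⟨a, rfl⟩
  | a :: b :: l, h => by simp at h

theorem A_singleton {φ : D → Set (List D)} {A : List D → Set (List D)}
    (hA : IsRRAttack φ A) (d : D) : A [d] = φ d := by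
  have h := hA.2.2 [] d
  simp only [List.nil_append] at h
  rw [h]
  ext v
  simp [hA.2.1]

theorem A_append {φ : D → Set (List D)} {A : List D → Set (List D)}
    (hA : IsRRAttack φ A) (x y : List D) :
    ∀ v, v ∈ A (x ++ y) ↔ ∃ a ∈ A x, ∃ b ∈ A y, v = a ++ b := by
  induction y using List.reverseRecOn with
  | nil => intro v; simp [hA.2.1]
  | append_singleton y t ih =>
    intro v
    rw [show x ++ (y ++ [t]) = (x ++ y) ++ [t] by simp, hA.2.2]
    constructor
    · rintro ⟨wy, hwy, wt, hwt, rfl⟩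
      obtain ⟨a, ha, b, hb, rfl⟩ := (ih wy).1 hwy
      exact ⟨a, ha, b ++ wt, (hA.2.2 y t) ▸ ⟨b, hb, wt, hwt, rfl⟩, by simp⟩
    · rintro ⟨a, ha, b, hb, rfl⟩
      rw [hA.2.2] at hb
      obtain ⟨wy, hwy, wt, hwt, rfl⟩ := hb
      exact ⟨a ++ wy, (ih _).2 ⟨a, ha, wy, hwy, rfl⟩, wt, hwt, by simp⟩

theorem eps_mem_A_nil {φ : D → Set (List D)} {A : List D → Set (List D)}
    (hA : IsRRAttack φ A) (P : List S → List D) (hP : IsObsMap P) :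
    [] ∈ A (P []) := by
  rw [hP.1, hA.2.1]; rfl

theorem comp_mem (P : List S → List D) (hP : IsObsMap P)
    {φ : D → Set (List D)} {A : List D → Set (List D)} (hA : IsRRAttack φ A)
    (w₁ : List S) (e : S) (u : List S) {y : List D} {t : D}
    (h1 : y ∈ A (P w₁)) (h2 : [t] ∈ A (P [e])) (h3 : [] ∈ A (P u)) :
    y ++ [t] ∈ A (P (w₁ ++ e :: u)) := by
  have hw : w₁ ++ e :: u = (w₁ ++ [e]) ++ u := by simp
  rw [hw, hP.2.1, hP.2.1]
  exact (A_append hA _ _ _).2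
    ⟨y ++ [t], (A_append hA _ _ _).2 ⟨y, h1, [t], h2, rfl⟩, [], h3, by simp⟩

theorem decomp (P : List S → List D) (hP : IsObsMap P)
    {φ : D → Set (List D)} {A : List D → Set (List D)} (hA : IsRRAttack φ A) :
    ∀ (w : List S) (y : List D) (t : D), y ++ [t] ∈ A (P w) →
      ∃ w₁ e u, w = w₁ ++ e :: u ∧ y ∈ A (P w₁) ∧ [t] ∈ A (P [e]) ∧ [] ∈ A (P u) := by
  intro w
  induction w using List.reverseRecOn with
  | nil => intro y t h; rw [hP.1, hA.2.1] at h; simp at h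
  | append_singleton w e ih =>
    intro y t h
    rw [hP.2.1] at h
    rcases len_le_one' (hP.2.2 e) with he | ⟨d, hd⟩
    · rw [he, List.append_nil] at h
      obtain ⟨w₁, e', u, rfl, h1, h2, h3⟩ := ih y t h
      refine ⟨w₁, e', u ++ [e], by simp, h1, h2, ?_⟩
      rw [hP.2.1, he, List.append_nil]; exact h3
    · rw [hd, hA.2.2] at h
      obtain ⟨wy, hwy, wt, hwt, heq⟩ := h
      rcases len_le_one' (hA.1 d wt hwt) with rfl | ⟨t', rfl⟩
      · rw [List.append_nil] at heq
        obtain ⟨w₁, e', u, rfl, h1, h2, h3⟩ := ih y t (heq ▸ hwy)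
        refine ⟨w₁, e', u ++ [e], by simp, h1, h2, ?_⟩
        rw [hP.2.1, hd]
        exact (A_append hA _ _ _).2 ⟨[], h3, [], by rw [A_singleton hA]; exact hwt, by simp⟩
      · obtain ⟨rfl, ht⟩ := List.append_inj' heq rfl
        obtain rfl : t = t' := by simpa using ht
        refine ⟨w, e, [], by simp, hwy, ?_, eps_mem_A_nil hA P hP⟩
        rw [hd, A_singleton hA]; exact hwt

theorem main_run (P : List S → List D) (hP : IsObsMap P)
    {φ : D → Set (List D)} {A : List D → Set (List D)} (hA : IsRRAttack φ A)
    (η : R → S → Option R) (r₀ : R) (y : List D) :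
    run (etaObs P A η) (UR P A η {r₀}) y =
      if ({z : R | ∃ w : List S, run η r₀ w = some z ∧ y ∈ A (P w)} : Set R).Nonempty
      then some {z : R | ∃ w : List S, run η r₀ w = some z ∧ y ∈ A (P w)}
      else none := by
  induction y using List.reverseRecOn with
  | nil =>
    have hB : UR P A η {r₀}
        = {z : R | ∃ w : List S, run η r₀ w = some z ∧ ([] : List D) ∈ A (P w)} := by
      ext z
      constructor
      · rintro ⟨r, hr, u, hu, hz⟩
        have : r = r₀ := hr
        subst this
        exact ⟨u, hz, hu⟩
      · rintro ⟨w, hz, hw⟩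
        exact ⟨r₀, rfl, w, hw, hz⟩
    have hne : ({z : R | ∃ w : List S, run η r₀ w = some z
        ∧ ([] : List D) ∈ A (P w)} : Set R).Nonempty :=
      ⟨r₀, [], rfl, eps_mem_A_nil hA P hP⟩
    rw [if_pos hne]
    show some (UR P A η {r₀}) = _
    rw [hB]
  | append_singleton y t ih =>
    rw [run_append', ih]
    by_cases hy : ({z : R | ∃ w, run η r₀ w = some z ∧ y ∈ A (P w)} : Set R).Nonempty
    · rw [if_pos hy, Option.bind_some, run_single]
      set Sy := {z : R | ∃ w, run η r₀ w = some z ∧ y ∈ A (P w)} with hSy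
      set Syt := {z : R | ∃ w, run η r₀ w = some z ∧ y ++ [t] ∈ A (P w)} with hSyt
      set gen := {z : R | ∃ r ∈ Sy, ∃ e : S, [t] ∈ A (P [e]) ∧ η r e = some z} with hgen
      have key : UR P A η gen = Syt := by
        ext z
        constructor
        · rintro ⟨z', ⟨r, ⟨w₁, hr, hy1⟩, e, ht, he⟩, u, hu, hz⟩
          refine ⟨w₁ ++ e :: u, ?_, comp_mem P hP hA w₁ e u hy1 ht hu⟩
          rw [run_append' η w₁ (e :: u) r₀, hr]
          simp [run, he, hz]
        · rintro ⟨w, hz, hw⟩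
          obtain ⟨w₁, e, u, rfl, h1, h2, h3⟩ := decomp P hP hA w y t hw
          rw [run_append' η w₁ (e :: u) r₀] at hz
          cases hr : run η r₀ w₁ with
          | none => rw [hr] at hz; simp at hz
          | some r =>
            rw [hr, Option.bind_some] at hz
            cases he : η r e with
            | none => simp [run, he] at hz
            | some z' =>
              simp only [run, he] at hz
              exact ⟨z', ⟨r, ⟨w₁, hr, h1⟩, e, h2, he⟩, u, h3, hz⟩
      have hcond : (∃ r ∈ Sy, ∃ e : S, [t] ∈ A (P [e]) ∧ (η r e).isSome) ↔ Syt.Nonempty := by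
        constructor
        · rintro ⟨r, hr, e, ht, hsome⟩
          obtain ⟨z', he⟩ := Option.isSome_iff_exists.1 hsome
          have hz : z' ∈ UR P A η gen :=
            ⟨z', ⟨r, hr, e, ht, he⟩, [], eps_mem_A_nil hA P hP, rfl⟩
          rw [key] at hz
          exact ⟨z', hz⟩
        · rintro ⟨z, hz⟩
          rw [← key] at hz
          obtain ⟨z', ⟨r, hr, e, ht, he⟩, u, hu, hzz⟩ := hz
          exact ⟨r, hr, e, ht, by simp [he]⟩
      show etaObs P A η Sy t = _
      rw [etaObs]
      by_cases hc : ∃ r ∈ Sy, ∃ e : S, [t] ∈ A (P [e]) ∧ (η r e).isSome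
      · rw [if_pos hc, if_pos (hcond.1 hc), key]
      · rw [if_neg hc, if_neg (fun h => hc (hcond.2 h))]
    · rw [if_neg hy]
      have hyt : ¬ ({z : R | ∃ w, run η r₀ w = some z ∧ y ++ [t] ∈ A (P w)} : Set R).Nonempty := by
        rintro ⟨z, w, hz, hw⟩
        obtain ⟨w₁, e, u, rfl, h1, h2, h3⟩ := decomp P hP hA w y t hw
        rw [run_append'] at hz
        cases hr : run η r₀ w₁ with
        | none => rw [hr] at hz; simp at hz
        | some r => exact hy ⟨r, w₁, hr, h1⟩
      rw [if_neg hyt]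
      rfl


/-- the observer generates exactly the attacked observations of the
specification language: `L(Obs_A(G_K)) = AP(L(G_K))`. -/
theorem stmt14 (P : List S → List D) (hP : IsObsMap P)
    (φ : D → Set (List D)) (A : List D → Set (List D)) (hA : IsRRAttack φ A)
    (η : R → S → Option R) (r₀ : R) :
    {y : List D | (run (etaObs P A η) (UR P A η {r₀}) y).isSome}
      = {y : List D | ∃ w : List S, (run η r₀ w).isSome ∧ y ∈ A (P w)} := by
  ext y
  simp only [Set.mem_setOf_eq]
  rw [main_run P hP hA η r₀ y]
  by_cases h : ({z : R | ∃ w, run η r₀ w = some z ∧ y ∈ A (P w)} : Set R).Nonempty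
  · rw [if_pos h]
    obtain ⟨z, w, hz, hw⟩ := h
    exact iff_of_true rfl ⟨w, by simp [hz], hw⟩
  · rw [if_neg h]
    constructor
    · intro hh; simp at hh
    · rintro ⟨w, hs, hw⟩
      obtain ⟨z, hz⟩ := Option.isSome_iff_exists.1 hs
      exact absurd ⟨z, w, hz, hw⟩ h
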